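/- arXiv:0808.2829 — 2 statements merged into one kernel-verified Lean document; each statement's English description precedes it below -/
import Mathlib

section
/- Let V be a two-mode covariance matrix, let ν, μ be positive reals, and let S be a 4×4 real matrix with S 𝒥 Sᵀ = 𝒥 and S (Λ V Λ) Sᵀ = diag(ν, ν, μ, μ), where Λ = diag(1, −1, 1, 1). If W_a and W_b are the upper-left and upper-right 2×2 blocks of S, then |det W_b − det W_a| ≤ ν. -/
open Matrix Real ComplexOrder

noncomputable section

def J2 : Matrix (Fin 2) (Fin 2) ℝ := !![0, 1; -1, 0]
def Z2 : Matrix (Fin 2) (Fin 2) ℝ := !![1, 0; 0, -1]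
def J4 : Matrix (Fin 2 ⊕ Fin 2) (Fin 2 ⊕ Fin 2) ℝ := fromBlocks J2 0 0 J2

/-- A two-mode covariance matrix: real symmetric with `V + i𝒥 ⪰ 0`. -/
def IsCovMat (V : Matrix (Fin 2 ⊕ Fin 2) (Fin 2 ⊕ Fin 2) ℝ) : Prop :=
  V.IsSymm ∧ (V.map (Complex.ofReal) + Complex.I • J4.map (Complex.ofReal)).PosSemidef

/-- Noise matrix N = Z A Z + Z C + Cᵀ Z + B of the Braunstein-Kimble protocol. -/
def noiseMat (V : Matrix (Fin 2 ⊕ Fin 2) (Fin 2 ⊕ Fin 2) ℝ) : Matrix (Fin 2) (Fin 2) ℝ :=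
  Z2 * V.toBlocks₁₁ * Z2 + Z2 * V.toBlocks₁₂ + (V.toBlocks₁₂)ᵀ * Z2 + V.toBlocks₂₂

/-- Coherent-state teleportation fidelity F = 2/√(4 + 2 Tr N + det N). -/
def Fid (V : Matrix (Fin 2 ⊕ Fin 2) (Fin 2 ⊕ Fin 2) ℝ) : ℝ :=
  2 / Real.sqrt (4 + 2 * (noiseMat V).trace + (noiseMat V).det)

def SigmaV (V : Matrix (Fin 2 ⊕ Fin 2) (Fin 2 ⊕ Fin 2) ℝ) : ℝ :=
  (V.toBlocks₁₁).det + (V.toBlocks₂₂).det - 2 * (V.toBlocks₁₂).det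

/-- Lowest partially transposed symplectic eigenvalue ν. -/
def nuPT (V : Matrix (Fin 2 ⊕ Fin 2) (Fin 2 ⊕ Fin 2) ℝ) : ℝ :=
  Real.sqrt ((SigmaV V - Real.sqrt ((SigmaV V)^2 - 4 * V.det)) / 2)

def LambdaPT : Matrix (Fin 2 ⊕ Fin 2) (Fin 2 ⊕ Fin 2) ℝ := fromBlocks Z2 0 0 1

/-!
Conjugating `V + i𝒥 ⪰ 0` by the real matrix `SΛ` keeps it positive semidefinite and turns it
into `diag(ν, ν, μ, μ) + i S(Λ𝒥Λ)Sᵀ`. Since `M J Mᵀ = (det M) J` for every 2×2 matrix `M` and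
`ΛJΛ` flips the sign of the first mode's `J`, the upper-left block of `S(Λ𝒥Λ)Sᵀ` is `ε J`.
The principal block `[[ν, iε], [-iε, ν]]` is then positive semidefinite, and evaluating it on
`(1, ±i)` gives `2(ν ∓ ε) ≥ 0`.
-/

lemma mul_J2_mul_transpose (M : Matrix (Fin 2) (Fin 2) ℝ) : M * J2 * Mᵀ = M.det • J2 := by
  ext i j
  fin_cases i <;> fin_cases j <;>
    simp [J2, Matrix.mul_apply, Fin.sum_univ_two, Matrix.det_fin_two] <;> ring

lemma Z2_mul_J2_mul_Z2 : Z2 * J2 * Z2 = -J2 := by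
  ext i j
  fin_cases i <;> fin_cases j <;> simp [Z2, J2]

lemma LambdaPT_mul_J4_mul_LambdaPT : LambdaPT * J4 * LambdaPT = fromBlocks (-J2) 0 0 J2 := by
  simp [LambdaPT, J4, fromBlocks_multiply, Z2_mul_J2_mul_Z2]

lemma transpose_LambdaPT : LambdaPTᵀ = LambdaPT := by
  have hZ : Z2ᵀ = Z2 := by ext i j; fin_cases i <;> fin_cases j <;> simp [Z2]
  simp [LambdaPT, fromBlocks_transpose, hZ]

lemma toBlocks₁₁_mul_fromBlocks_diagonal_mul_transpose {k l m n α : Type*}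
    [Fintype m] [Fintype n] [Semiring α] (S : Matrix (k ⊕ l) (m ⊕ n) α)
    (A : Matrix m m α) (D : Matrix n n α) :
    (S * fromBlocks A 0 0 D * Sᵀ).toBlocks₁₁ =
      S.toBlocks₁₁ * A * S.toBlocks₁₁ᵀ + S.toBlocks₁₂ * D * S.toBlocks₁₂ᵀ := by
  rw [← fromBlocks_toBlocks S]
  simp [fromBlocks_transpose, fromBlocks_multiply, Matrix.mul_assoc]

lemma posSemidef_map_add_I_smul_map_congr {m n : Type*} [Finite m] [Fintype n] {A B : Matrix n n ℝ}
    (h : (A.map Complex.ofReal + Complex.I • B.map Complex.ofReal).PosSemidef)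
    (M : Matrix m n ℝ) :
    ((M * A * Mᵀ).map Complex.ofReal +
      Complex.I • (M * B * Mᵀ).map Complex.ofReal).PosSemidef := by
  convert h.mul_mul_conjTranspose_same (M.map Complex.ofReal) using 1
  rw [← conjTranspose_map _ (fun _ => (Complex.conj_ofReal _).symm),
    show (Complex.ofReal : ℝ → ℂ) = Complex.ofRealHom from rfl]
  simp only [Matrix.map_mul, conjTranspose_eq_transpose_of_trivial, Matrix.mul_add,
    Matrix.add_mul, Matrix.mul_smul, Matrix.smul_mul]

lemma posSemidef_toBlocks₁₁_map_add_I_smul_map {m n : Type*} {A B : Matrix (m ⊕ n) (m ⊕ n) ℝ}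
    (h : (A.map Complex.ofReal + Complex.I • B.map Complex.ofReal).PosSemidef) :
    (A.toBlocks₁₁.map Complex.ofReal +
      Complex.I • B.toBlocks₁₁.map Complex.ofReal).PosSemidef := by
  convert h.submatrix Sum.inl using 1
  ext i j
  simp [toBlocks₁₁]

lemma abs_le_of_posSemidef_smul_one_add_I_smul_J2 {ν ε : ℝ}
    (h : ((ν • 1 : Matrix (Fin 2) (Fin 2) ℝ).map Complex.ofReal +
      Complex.I • (ε • J2).map Complex.ofReal).PosSemidef) : |ε| ≤ ν := by
  have hsign : ∀ s : ℝ, s ^ 2 = 1 → s * ε ≤ ν := by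
    intro s hs
    have hq := h.dotProduct_mulVec_nonneg ![1, Complex.I * s]
    have hval : star ![1, Complex.I * s] ⬝ᵥ ((ν • 1 : Matrix (Fin 2) (Fin 2) ℝ).map Complex.ofReal +
        Complex.I • (ε • J2).map Complex.ofReal) *ᵥ ![1, Complex.I * s] =
        ((2 * (ν - s * ε) : ℝ) : ℂ) := by
      have hs' : (s : ℂ) ^ 2 = 1 := by exact_mod_cast hs
      simp [J2, dotProduct, mulVec, Fin.sum_univ_two, Complex.conj_ofReal]
      linear_combination (ν : ℂ) * hs' + (2 * ε * s - ν * s ^ 2 : ℂ) * Complex.I_sq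
    rw [hval, Complex.zero_le_real] at hq
    linarith
  exact abs_le.2 ⟨by linarith [hsign (-1) (by norm_num)], by linarith [hsign 1 (by norm_num)]⟩

lemma toBlocks₁₁_mul_LambdaPT_J4_LambdaPT_mul_transpose
    (S : Matrix (Fin 2 ⊕ Fin 2) (Fin 2 ⊕ Fin 2) ℝ) :
    (S * (LambdaPT * J4 * LambdaPT) * Sᵀ).toBlocks₁₁ =
      ((S.toBlocks₁₂).det - (S.toBlocks₁₁).det) • J2 := by
  rw [LambdaPT_mul_J4_mul_LambdaPT, toBlocks₁₁_mul_fromBlocks_diagonal_mul_transpose,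
    Matrix.mul_neg, Matrix.neg_mul, mul_J2_mul_transpose, mul_J2_mul_transpose, sub_smul]
  abel

lemma mul_LambdaPT_mul_mul_transpose (S X : Matrix (Fin 2 ⊕ Fin 2) (Fin 2 ⊕ Fin 2) ℝ) :
    S * LambdaPT * X * (S * LambdaPT)ᵀ = S * (LambdaPT * X * LambdaPT) * Sᵀ := by
  simp only [transpose_mul, transpose_LambdaPT, Matrix.mul_assoc]

theorem epsilon_bounded_by_nu_general (V : Matrix (Fin 2 ⊕ Fin 2) (Fin 2 ⊕ Fin 2) ℝ)
    (hV : IsCovMat V) (ν μ : ℝ)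
    (S : Matrix (Fin 2 ⊕ Fin 2) (Fin 2 ⊕ Fin 2) ℝ)
    (hdiag : S * (LambdaPT * V * LambdaPT) * Sᵀ =
      fromBlocks (ν • (1 : Matrix (Fin 2) (Fin 2) ℝ)) 0 0 (μ • (1 : Matrix (Fin 2) (Fin 2) ℝ))) :
    |(S.toBlocks₁₂).det - (S.toBlocks₁₁).det| ≤ ν := by
  have hconj := posSemidef_map_add_I_smul_map_congr hV.2 (S * LambdaPT)
  rw [mul_LambdaPT_mul_mul_transpose, mul_LambdaPT_mul_mul_transpose, hdiag] at hconj
  have hmode := posSemidef_toBlocks₁₁_map_add_I_smul_map hconj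
  rw [toBlocks_fromBlocks₁₁, toBlocks₁₁_mul_LambdaPT_J4_LambdaPT_mul_transpose] at hmode
  exact abs_le_of_posSemidef_smul_one_add_I_smul_J2 hmode

/-- Heisenberg bound |det W_b − det W_a| ≤ ν for the blocks of a
symplectic matrix diagonalizing the partially transposed covariance matrix. -/
theorem epsilon_bounded_by_nu (V : Matrix (Fin 2 ⊕ Fin 2) (Fin 2 ⊕ Fin 2) ℝ)
    (hV : IsCovMat V) (ν μ : ℝ) (hν : 0 < ν) (hμ : 0 < μ)
    (S : Matrix (Fin 2 ⊕ Fin 2) (Fin 2 ⊕ Fin 2) ℝ)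
    (hS : S * J4 * Sᵀ = J4)
    (hdiag : S * (LambdaPT * V * LambdaPT) * Sᵀ =
      fromBlocks (ν • (1 : Matrix (Fin 2) (Fin 2) ℝ)) 0 0 (μ • (1 : Matrix (Fin 2) (Fin 2) ℝ))) :
    |(S.toBlocks₁₂).det - (S.toBlocks₁₁).det| ≤ ν :=
  epsilon_bounded_by_nu_general V hV ν μ S hdiag
end
end

section
/- Fix n > 0 and for r > 0 let W(r) be the 4×4 real matrix with 2×2 blocks A(r) = cosh(r)·I, B(r) = (2n + cosh r)·I, C(r) = −sinh(r)·Z, where Z = diag(1,−1), i.e. W(r) = [[A(r), C(r)],[C(r)ᵀ, B(r)]]. Let ν(W(r)) = √((Σ − √(Σ² − 4 det W(r)))/2) with Σ = det A(r) + det B(r) − 2 det C(r). Then ν(W(r)) tends to n as r → ∞. -/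
open Matrix Real ComplexOrder

noncomputable section

/-- The covariance matrix after entanglement swapping with squeezing parameter r. -/
def Wswap (n r : ℝ) : Matrix (Fin 2 ⊕ Fin 2) (Fin 2 ⊕ Fin 2) ℝ :=
  fromBlocks (Real.cosh r • (1 : Matrix (Fin 2) (Fin 2) ℝ)) (-(Real.sinh r) • Z2)
    ((-(Real.sinh r) • Z2)ᵀ) ((2 * n + Real.cosh r) • (1 : Matrix (Fin 2) (Fin 2) ℝ))

lemma Z2_mul_Z2 : Z2 * Z2 = 1 := by
  rw [Z2]; ext i j
  fin_cases i <;> fin_cases j <;>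
    simp [Matrix.mul_apply, Fin.sum_univ_two, Matrix.one_apply]

lemma Z2_transpose : (Z2)ᵀ = Z2 := by
  rw [Z2]; ext i j; fin_cases i <;> fin_cases j <;> simp

lemma Z2_det : Z2.det = -1 := by rw [Z2, Matrix.det_fin_two_of]; norm_num

lemma Wswap_det (n r : ℝ) : (Wswap n r).det = (2 * n * Real.cosh r + 1) ^ 2 := by
  have h := Real.cosh_sq_sub_sinh_sq r
  have hc : (0:ℝ) < Real.cosh r := Real.cosh_pos r
  set c := Real.cosh r with hcdef
  set s := Real.sinh r with hsdef
  have hA : Invertible (c • (1 : Matrix (Fin 2) (Fin 2) ℝ)) := by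
    apply Matrix.invertibleOfIsUnitDet
    apply Ne.isUnit
    simp only [Matrix.det_smul, Matrix.det_one, Fintype.card_fin, mul_one]
    positivity
  rw [Wswap, Matrix.det_fromBlocks₁₁]
  have hinv : ⅟(c • (1 : Matrix (Fin 2) (Fin 2) ℝ)) = c⁻¹ • (1 : Matrix (Fin 2) (Fin 2) ℝ) := by
    have : Invertible c := invertibleOfNonzero hc.ne'
    rw [Matrix.invOf_eq_nonsing_inv,
      Matrix.inv_smul (A := (1 : Matrix (Fin 2) (Fin 2) ℝ)) c (by simp), inv_one, invOf_eq_inv]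
  rw [hinv]
  have key : ((2 * n + c) • (1 : Matrix (Fin 2) (Fin 2) ℝ) -
      (-s • Z2)ᵀ * (c⁻¹ • (1 : Matrix (Fin 2) (Fin 2) ℝ)) * (-s • Z2)) =
      (2 * n + c - s^2/c) • (1 : Matrix (Fin 2) (Fin 2) ℝ) := by
    simp only [Matrix.transpose_smul, Z2_transpose, Matrix.smul_mul, Matrix.mul_smul,
      Matrix.mul_one, Z2_mul_Z2, smul_smul, ← sub_smul]
    congr 1
    field_simp
  rw [key, Matrix.det_smul, Matrix.det_smul]
  simp only [Matrix.det_one, Fintype.card_fin, mul_one]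
  have hs2 : s^2 = c^2 - 1 := by linarith
  rw [hs2]
  field_simp
  ring

lemma Wswap_Sigma (n r : ℝ) :
    SigmaV (Wswap n r) = 4 * Real.cosh r ^ 2 + 4 * n * Real.cosh r + 4 * n ^ 2 - 2 := by
  have h := Real.cosh_sq_sub_sinh_sq r
  rw [SigmaV, Wswap, Matrix.toBlocks_fromBlocks₁₁, Matrix.toBlocks_fromBlocks₂₂,
    Matrix.toBlocks_fromBlocks₁₂, Matrix.det_smul, Matrix.det_smul, Matrix.det_smul]
  simp only [Matrix.det_one, Fintype.card_fin, mul_one, Z2_det]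
  nlinarith [h]

lemma nuPT_Wswap (n r : ℝ) (hn : 0 < n) :
    nuPT (Wswap n r) = n + (1 - n ^ 2) / (Real.cosh r + Real.sqrt (Real.cosh r ^ 2 + n ^ 2 - 1)) := by
  have hc1 : (1:ℝ) ≤ Real.cosh r := Real.one_le_cosh r
  set c := Real.cosh r with hcdef
  have hX : (0:ℝ) ≤ c ^ 2 + n ^ 2 - 1 := by nlinarith
  set X := c ^ 2 + n ^ 2 - 1 with hXdef
  have hsX : Real.sqrt X ^ 2 = X := Real.sq_sqrt hX
  have hsXnn : 0 ≤ Real.sqrt X := Real.sqrt_nonneg X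
  have hcn : 0 < c + n := by linarith
  -- sqrt X ≤ c + n
  have hle : Real.sqrt X ≤ c + n := by
    rw [show c + n = Real.sqrt ((c+n)^2) by rw [Real.sqrt_sq hcn.le]]
    apply Real.sqrt_le_sqrt
    nlinarith
  have hden : 0 < c + Real.sqrt X := by linarith
  rw [nuPT, Wswap_Sigma n r, Wswap_det n r, ← hcdef]
  have h1 : (4 * c ^ 2 + 4 * n * c + 4 * n ^ 2 - 2) ^ 2 - 4 * (2 * n * c + 1) ^ 2
      = (4 * (c + n) * Real.sqrt X) ^ 2 := by
    rw [mul_pow, mul_pow, hsX, hXdef]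
    ring
  rw [h1, Real.sqrt_sq (by positivity)]
  have h2 : (4 * c ^ 2 + 4 * n * c + 4 * n ^ 2 - 2 - 4 * (c + n) * Real.sqrt X) / 2
      = (c + n - Real.sqrt X) ^ 2 := by
    have : (c + n - Real.sqrt X) ^ 2 = (c+n)^2 - 2*(c+n)*Real.sqrt X + Real.sqrt X ^ 2 := by ring
    rw [this, hsX, hXdef]
    ring
  rw [h2, Real.sqrt_sq (by linarith)]
  have : (c + n - Real.sqrt X) * (c + Real.sqrt X) = (n + (1 - n^2)/(c + Real.sqrt X)) * (c + Real.sqrt X) := by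
    rw [add_mul, div_mul_cancel₀ _ hden.ne']
    nlinarith [hsX]
  exact mul_right_cancel₀ hden.ne' this

/-- the lowest PT symplectic eigenvalue of W_swap tends to n as r → ∞. -/
theorem nu_Wswap_tendsto (n : ℝ) (hn : 0 < n) :
    Filter.Tendsto (fun r => nuPT (Wswap n r)) Filter.atTop (nhds n) := by
  have heq : ∀ r, nuPT (Wswap n r)
      = n + (1 - n ^ 2) / (Real.cosh r + Real.sqrt (Real.cosh r ^ 2 + n ^ 2 - 1)) :=
    fun r => nuPT_Wswap n r hn
  simp only [heq]
  have hden : Filter.Tendsto (fun r => Real.cosh r + Real.sqrt (Real.cosh r ^ 2 + n ^ 2 - 1))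
      Filter.atTop Filter.atTop := by
    have hcosh : Filter.Tendsto Real.cosh Filter.atTop Filter.atTop := by
      apply Filter.tendsto_atTop_mono (fun x => ?_)
        (Filter.Tendsto.atTop_div_const two_pos Real.tendsto_exp_atTop)
      rw [Real.cosh_eq]
      have := (Real.exp_pos (-x)).le
      linarith
    apply Filter.tendsto_atTop_mono (fun x => ?_) hcosh
    have := Real.sqrt_nonneg (Real.cosh x ^ 2 + n ^ 2 - 1)
    linarith
  have h0 : Filter.Tendsto (fun r => (1 - n ^ 2) / (Real.cosh r + Real.sqrt (Real.cosh r ^ 2 + n ^ 2 - 1)))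
      Filter.atTop (nhds 0) := Filter.Tendsto.div_atTop tendsto_const_nhds hden
  have := Filter.Tendsto.const_add n h0
  simpa using this
end
end
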